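/- arXiv:2509.14071 — 2 statements merged into one kernel-verified Lean document; each statement's English description precedes it below -/
import Mathlib

section
/- With L_{i,j}(v) as above, for all i ≥ 1 and j ≥ 0: -2 β_i(-v) β_{i-1}(-v) * sum over k from 0 to j of (L_{i,k}(v) - 2 β_i(v) β_{i-1}(v) L_{i-1,k}(v)) * w_k = L_{i,j}(-v), where w_k = 1 for k < j and w_j = 1/2 - v(-1)^j. -/
noncomputable def betaFn (i : ℕ) (v : ℝ) : ℝ :=
  if i % 4 = 0 then 1 / (1 - 2 * v) else if i % 4 = 2 then 1 / (1 + 2 * v) else 1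

noncomputable def Lcoef : ℕ → ℤ → ℝ → ℝ
  | 0, j, _ => if j = 0 then 1 else 0
  | (i + 1), j, v => (Lcoef i j v + Lcoef i (j - 1) (-v)) * betaFn i v

/-!
Write `M_k` for the summands `L_{i,k}(v) - 2 β_i(v) β_{i-1}(v) L_{i-1,k}(v)` and `c` for the
prefactor `-2 β_i(-v) β_{i-1}(-v)`. The heart of the matter is the local identity
`L_{i,j}(-v) - L_{i,j-1}(-v) = c (1/2 - v (-1)^j) (M_{j-1} + M_j)`, proved by induction on `i`
(for all `v` and `j` at once, since the recursion flips `v` and shifts `j`). Besides the recursion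
it only uses `β_{i+2}(v) = β_i(-v)` and `β_i(v) + β_i(-v) = 2 β_i(v) β_i(-v)`. Since the weights
satisfy `1 - w_j = 1/2 - v (-1)^(j+1)`, the weighted partial sums telescope against this identity.
-/

section betaFn

variable (v : ℝ)

theorem betaFn_add_two (i : ℕ) : betaFn (i + 2) v = betaFn i (-v) := by
  have h : (i + 2) % 4 = (i % 4 + 2) % 4 := by omega
  unfold betaFn
  rcases (show i % 4 = 0 ∨ i % 4 = 1 ∨ i % 4 = 2 ∨ i % 4 = 3 by omega) with h' | h' | h' | h' <;>
    simp [h, h', sub_eq_add_neg]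

theorem betaFn_one : betaFn 1 v = 1 := rfl

variable {v}

theorem betaFn_zero_mul (h₁ : 1 - 2 * v ≠ 0) : betaFn 0 v * (1 - 2 * v) = 1 := by
  simp [betaFn, h₁]

theorem betaFn_add_betaFn_neg (i : ℕ) (h₁ : 1 - 2 * v ≠ 0) (h₂ : 1 + 2 * v ≠ 0) :
    betaFn i v + betaFn i (-v) = 2 * betaFn i v * betaFn i (-v) := by
  simp only [betaFn, mul_neg, sub_neg_eq_add, ← sub_eq_add_neg]
  split_ifs
  · field_simp; ring
  · field_simp; ring
  · norm_num

end betaFn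

theorem Lcoef_zero (j : ℤ) (v : ℝ) : Lcoef 0 j v = if j = 0 then 1 else 0 := rfl

theorem Lcoef_succ (i : ℕ) (j : ℤ) (v : ℝ) :
    Lcoef (i + 1) j v = (Lcoef i j v + Lcoef i (j - 1) (-v)) * betaFn i v := rfl

theorem Lcoef_of_neg (i : ℕ) {j : ℤ} (hj : j < 0) (v : ℝ) : Lcoef i j v = 0 := by
  induction i generalizing j v with
  | zero => simp [Lcoef_zero, hj.ne]
  | succ i ih => simp [Lcoef_succ, ih hj, ih (show j - 1 < 0 by omega)]

/-- The summand of `Lcoef_partial_sum` for `i = m + 1`. -/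
noncomputable def Mcoef (m : ℕ) (k : ℤ) (v : ℝ) : ℝ :=
  Lcoef (m + 1) k v - 2 * betaFn (m + 1) v * betaFn m v * Lcoef m k v

theorem Lcoef_neg_sub_pred_eq_Mcoef (m : ℕ) (j : ℤ) (v : ℝ) (h₁ : 1 - 2 * v ≠ 0)
    (h₂ : 1 + 2 * v ≠ 0) :
    Lcoef (m + 1) j (-v) - Lcoef (m + 1) (j - 1) (-v) =
      -2 * betaFn (m + 1) (-v) * betaFn m (-v) * (1 / 2 - v * (-1) ^ j) *
        (Mcoef m (j - 1) v + Mcoef m j v) := by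
  induction m generalizing j v with
  | zero =>
    have hβ := betaFn_zero_mul h₁
    simp only [Mcoef, Lcoef_succ, Lcoef_zero, betaFn_one, zero_add, sub_sub, Int.reduceAdd]
    by_cases hj : j = 0 ∨ j = 2
    · rcases hj with rfl | rfl <;> norm_num <;> linear_combination -betaFn 0 (-v) * hβ
    · obtain ⟨hj0, hj2⟩ := not_or.mp hj
      simp only [if_neg hj0, if_neg (sub_ne_zero.mpr hj2)]
      ring
  | succ n ih =>
    have hA := ih j v h₁ h₂
    have hB := ih (j - 1) (-v) (by contrapose! h₂; linarith) (by contrapose! h₁; linarith)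
    have rn := betaFn_add_betaFn_neg n h₁ h₂
    have rn1 := betaFn_add_betaFn_neg (n + 1) h₁ h₂
    rw [zpow_sub_one₀ (by norm_num)] at hB
    simp only [Mcoef, Lcoef_succ, betaFn_add_two, neg_neg, sub_sub, Int.reduceAdd] at hA hB ⊢
    -- Everything is now in terms of `L_n`; beyond `hA + hB` the difference is a multiple of
    -- `β_n(-v) r_{n+1} - β_{n+1}(v) r_n`, where `r_i` is the relation `betaFn_add_betaFn_neg`.
    linear_combination betaFn (n + 1) (-v) * (hA + hB) +
      -2 * betaFn (n + 1) (-v) * (1 / 2 - v * (-1) ^ j) * betaFn n v *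
        (Lcoef n (j - 1) v + Lcoef n j v + Lcoef n (j - 2) (-v) + Lcoef n (j - 1) (-v)) *
        (betaFn n (-v) * rn1 - betaFn (n + 1) v * rn)

theorem Mcoef_of_neg (m : ℕ) {k : ℤ} (hk : k < 0) (v : ℝ) : Mcoef m k v = 0 := by
  simp [Mcoef, Lcoef_of_neg _ hk]

theorem Finset.sum_range_succ_mul_ite_eq {R : Type*} [NonAssocSemiring R] (f : ℕ → R) (j : ℕ)
    (c : R) :
    ∑ k ∈ Finset.range (j + 1), f k * (if k = j then c else 1) =
      ∑ k ∈ Finset.range j, f k + f j * c := by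
  rw [Finset.sum_range_succ, if_pos rfl]
  congr 1
  refine Finset.sum_congr rfl fun k hk => ?_
  rw [if_neg (Finset.mem_range.mp hk).ne, mul_one]

theorem Mcoef_partial_sum (m j : ℕ) (v : ℝ) (h₁ : 1 - 2 * v ≠ 0) (h₂ : 1 + 2 * v ≠ 0) :
    -2 * betaFn (m + 1) (-v) * betaFn m (-v) *
        (∑ k ∈ Finset.range j, Mcoef m k v + Mcoef m j v * (1 / 2 - v * (-1) ^ j)) =
      Lcoef (m + 1) j (-v) := by
  induction j with
  | zero =>
    have h := Lcoef_neg_sub_pred_eq_Mcoef m 0 v h₁ h₂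
    rw [zero_sub, Lcoef_of_neg _ neg_one_lt_zero, Mcoef_of_neg _ neg_one_lt_zero] at h
    simp only [Finset.range_zero, Finset.sum_empty, pow_zero, Nat.cast_zero, zpow_zero] at h ⊢
    linear_combination -h
  | succ j ih =>
    have h := Lcoef_neg_sub_pred_eq_Mcoef m (j + 1) v h₁ h₂
    rw [add_sub_cancel_right, ← Nat.cast_add_one, zpow_natCast] at h
    rw [Finset.sum_range_succ]
    linear_combination ih - h

/-- For all `i ≥ 1` and `j ≥ 0`:
`-2 β_i(-v) β_{i-1}(-v) ∑_{k=0}^{j} (L_{i,k}(v) - 2β_i(v)β_{i-1}(v) L_{i-1,k}(v)) w_k = L_{i,j}(-v)`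
with `w_k = 1` for `k < j` and `w_j = 1/2 - v(-1)^j`. -/
theorem Lcoef_partial_sum (v : ℝ) (hv : |v| < 1 / 2) (i : ℕ) (hi : 1 ≤ i) (j : ℕ) :
    -2 * betaFn i (-v) * betaFn (i - 1) (-v) *
      ∑ k ∈ Finset.range (j + 1),
        (Lcoef i k v - 2 * betaFn i v * betaFn (i - 1) v * Lcoef (i - 1) k v) *
          (if k = j then 1 / 2 - v * (-1 : ℝ) ^ j else 1)
    = Lcoef i j (-v) := by
  obtain ⟨hv₁, hv₂⟩ := abs_lt.mp hv
  obtain ⟨m, rfl⟩ : ∃ m, i = m + 1 := ⟨i - 1, by omega⟩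
  rw [Nat.add_sub_cancel, Finset.sum_range_succ_mul_ite_eq]
  exact Mcoef_partial_sum m j v (by linarith) (by linarith)
end

section
/- For y₁ ≤ y₂ nonnegative integers, ℓ an integer, j ≥ 1, and v real, the alternating weighted power sum sum over x from y₁ to y₂ of (-1)^(ℓ+x) x^(j-1) Ω(x) — where Ω(y₂) = 1/2 + v(-1)^(ℓ+1+y₂), Ω(y₁) = 1/2 - v(-1)^(ℓ+1+y₁), and Ω(x) = 1 otherwise — equals -v(y₂^(j-1) - y₁^(j-1)) - sum over k from 2 to j of (B_k/j) binom(j,k) (2^k - 1) ((-1)^(ℓ+1+y₂) y₂^(j-k) - (-1)^(ℓ+1+y₁) y₁^(j-k)). -/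
/-!
Put `A(y) = y^(j-1)/2 + ∑_{k=2}^{j} (B_k/j) C(j,k) (2^k-1) y^(j-k)`. The key identity is
`A(y+1) + A(y) = (y+1)^(j-1)`, so `ε_ℓ(y) A(y)` telescopes the alternating sum of `x^(j-1)` over
`(y₁, y₂]`; the endpoint weights then only add the `v`-terms, because `ε_ℓ(y)² = 1`.

For `j ≥ 1`, `j A(y) - j y^(j-1) = ∑_{k=0}^{j} C(j,k) B_k (2^k-1) y^(j-k)`, and these have
exponential generating function `(B(2t) - B(t)) e^(yt) = -t e^(yt) / (e^t + 1)` in `j`, where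
`B(t) = t / (e^t - 1)` and `B(2t) (e^t + 1) = 2 B(t)`. Hence the generating functions at `y + 1`
and at `y` add up to `-t e^(yt)`, which is the key identity.
-/

open Finset PowerSeries Nat

section

variable {K : Type*} [Field K] [CharZero K]

theorem rescale_two_bernoulliPowerSeries_mul_exp_add_one :
    rescale 2 (bernoulliPowerSeries K) * (exp K + 1) = 2 * bernoulliPowerSeries K := by
  have hexp : exp K - 1 ≠ 0 := fun h => by simpa using congrArg (coeff 1) h
  apply mul_right_cancel₀ hexp
  have hsq : (exp K + 1) * (exp K - 1) = rescale 2 (exp K - 1) := by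
    rw [map_sub, map_one, ← Nat.cast_ofNat, ← exp_pow_eq_rescale_exp]
    ring
  rw [mul_assoc, hsq, ← map_mul, mul_assoc, bernoulliPowerSeries_mul_exp_sub_one, rescale_X,
    map_ofNat]

theorem rescale_two_bernoulliPowerSeries_sub_mul_exp_add_one :
    (rescale 2 (bernoulliPowerSeries K) - bernoulliPowerSeries K) * (exp K + 1) = -X := by
  rw [sub_mul, rescale_two_bernoulliPowerSeries_mul_exp_add_one, ← neg_sub,
    ← bernoulliPowerSeries_mul_exp_sub_one]
  ring

theorem mk_div_factorial_mul_mk_div_factorial (a b : ℕ → K) :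
    mk (fun n => a n / n !) * mk (fun n => b n / n !) =
      mk fun n => (∑ k ∈ range (n + 1), n.choose k * a k * b (n - k)) / n ! := by
  ext n
  rw [coeff_mul, Nat.sum_antidiagonal_eq_sum_range_succ_mk, coeff_mk, sum_div]
  refine sum_congr rfl fun k hk => ?_
  rw [mem_range, Nat.lt_succ_iff] at hk
  have : (n ! : K) ≠ 0 := Nat.cast_ne_zero.mpr n.factorial_ne_zero
  simp only [coeff_mk, Nat.cast_choose K hk]
  field_simp

/-- `eulerSum n y = 2^n B_n(y/2) - B_n(y) = -(n/2) E_{n-1}(y)`, with `E` the Euler polynomials. -/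
def eulerSum (n : ℕ) (y : K) : K :=
  ∑ k ∈ range (n + 1), n.choose k * (bernoulli k * (2 ^ k - 1)) * y ^ (n - k)

theorem mk_eulerSum_div_factorial (y : K) :
    mk (fun n => eulerSum n y / n !) =
      (rescale 2 (bernoulliPowerSeries K) - bernoulliPowerSeries K) * rescale y (exp K) := by
  have hB : rescale 2 (bernoulliPowerSeries K) - bernoulliPowerSeries K =
      mk fun n => (bernoulli n * (2 ^ n - 1) : K) / n ! := by
    ext n
    simp only [bernoulliPowerSeries, map_sub, coeff_rescale, coeff_mk, map_div₀, eq_ratCast,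
      map_natCast]
    ring
  have hE : rescale y (exp K) = mk fun n => y ^ n / n ! := by
    ext n
    simp [coeff_rescale, div_eq_mul_inv]
  rw [hB, hE, mk_div_factorial_mul_mk_div_factorial]
  rfl

theorem eulerSum_succ_add_one_add (n : ℕ) (y : K) :
    eulerSum (n + 1) (y + 1) + eulerSum (n + 1) y = -(n + 1) * y ^ n := by
  have h := congrArg (coeff (n + 1)) <| calc
    mk (fun n => eulerSum n (y + 1) / n !) + mk (fun n => eulerSum n y / n !)
      = (rescale 2 (bernoulliPowerSeries K) - bernoulliPowerSeries K) * (exp K + 1) *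
          rescale y (exp K) := by
        rw [mk_eulerSum_div_factorial, mk_eulerSum_div_factorial, ← exp_mul_exp_eq_exp_add,
          rescale_one, RingHom.id_apply]
        ring
    _ = -(X * rescale y (exp K)) := by
        rw [rescale_two_bernoulliPowerSeries_sub_mul_exp_add_one, neg_mul]
  simp only [map_add, coeff_mk, map_neg, coeff_succ_X_mul, coeff_rescale, coeff_exp,
    factorial_succ, cast_mul, cast_add, cast_one, one_div, map_inv₀, map_natCast] at h
  have : (n ! : K) ≠ 0 := Nat.cast_ne_zero.mpr n.factorial_ne_zero
  have : (n : K) + 1 ≠ 0 := by exact_mod_cast n.succ_ne_zero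
  field_simp at h
  linear_combination h

/-- The `A(y)` of `∑_{x=0}^{y} (-1)^x x^(j-1) = (-1)^y A(y) - (B_j/j)(2^j-1)` (for `j ≥ 1`). -/
def alternatingFaulhaber (j : ℕ) (y : K) : K :=
  y ^ (j - 1) / 2 + ∑ k ∈ Icc 2 j, (bernoulli k / j : K) * j.choose k * (2 ^ k - 1) * y ^ (j - k)

theorem alternatingFaulhaber_eq_add_eulerSum {j : ℕ} (hj : j ≠ 0) (y : K) :
    alternatingFaulhaber j y = y ^ (j - 1) + eulerSum j y / j := by
  have hsplit : eulerSum j y = -(j * y ^ (j - 1) / 2) +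
      ∑ k ∈ Icc 2 j, j.choose k * (bernoulli k * (2 ^ k - 1)) * y ^ (j - k) := by
    rw [eulerSum, range_eq_Ico, sum_eq_sum_Ico_succ_bot (by omega),
      sum_eq_sum_Ico_succ_bot (by omega), Ico_add_one_right_eq_Icc]
    norm_num [bernoulli_one]
    ring
  have hterm : ∑ k ∈ Icc 2 j, (bernoulli k / j : K) * j.choose k * (2 ^ k - 1) * y ^ (j - k) =
      (∑ k ∈ Icc 2 j, j.choose k * (bernoulli k * (2 ^ k - 1)) * y ^ (j - k)) / j := by
    rw [sum_div]
    exact sum_congr rfl fun k _ => by ring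
  have : (j : K) ≠ 0 := Nat.cast_ne_zero.mpr hj
  rw [alternatingFaulhaber, hterm, hsplit]
  field_simp
  ring

theorem alternatingFaulhaber_add_one_add (j : ℕ) (y : K) :
    alternatingFaulhaber j (y + 1) + alternatingFaulhaber j y = (y + 1) ^ (j - 1) := by
  rcases j with _ | n
  · norm_num [alternatingFaulhaber]
  · have : (n : K) + 1 ≠ 0 := by exact_mod_cast n.succ_ne_zero
    rw [alternatingFaulhaber_eq_add_eulerSum n.succ_ne_zero,
      alternatingFaulhaber_eq_add_eulerSum n.succ_ne_zero, add_add_add_comm, ← add_div,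
      eulerSum_succ_add_one_add]
    push_cast
    field_simp
    ring

theorem sum_Ioc_neg_one_zpow_mul_pow (ℓ : ℤ) (j : ℕ) {a b : ℕ} (hab : a ≤ b) :
    ∑ x ∈ Ioc a b, (-1 : K) ^ (ℓ + x) * (x : K) ^ (j - 1) =
      (-1) ^ (ℓ + b) * alternatingFaulhaber j (b : K) -
        (-1) ^ (ℓ + a) * alternatingFaulhaber j (a : K) := by
  induction b, hab using Nat.le_induction with
  | base => simp
  | succ b hab ih =>
    have hstep := alternatingFaulhaber_add_one_add j (b : K)
    rw [sum_Ioc_succ_top hab, ih]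
    push_cast
    rw [← add_assoc, zpow_add_one₀ (by norm_num)]
    linear_combination (-1 : K) ^ (ℓ + b) * hstep

theorem sum_Icc_bernoulli_mul_sub (j : ℕ) (c₁ c₂ y₁ y₂ : K) :
    ∑ k ∈ Icc 2 j, (bernoulli k / j : K) * j.choose k * (2 ^ k - 1) *
        (c₂ * y₂ ^ (j - k) - c₁ * y₁ ^ (j - k)) =
      c₂ * (alternatingFaulhaber j y₂ - y₂ ^ (j - 1) / 2) -
        c₁ * (alternatingFaulhaber j y₁ - y₁ ^ (j - 1) / 2) := by
  rw [alternatingFaulhaber, alternatingFaulhaber, add_sub_cancel_left, add_sub_cancel_left,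
    mul_sum, mul_sum, ← sum_sub_distrib]
  exact sum_congr rfl fun k _ => by ring

end

theorem alternating_weighted_power_sum_general (v : ℝ) (ℓ : ℤ) (j : ℕ)
    (y₁ y₂ : ℕ) (h : y₁ < y₂) :
    ∑ x ∈ Finset.Icc y₁ y₂, (-1 : ℝ) ^ (ℓ + (x : ℤ)) * (x : ℝ) ^ (j - 1) *
        (if x = y₂ then 1 / 2 + v * (-1 : ℝ) ^ (ℓ + 1 + (y₂ : ℤ))
         else if x = y₁ then 1 / 2 - v * (-1 : ℝ) ^ (ℓ + 1 + (y₁ : ℤ)) else 1)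
      = -v * ((y₂ : ℝ) ^ (j - 1) - (y₁ : ℝ) ^ (j - 1))
        - ∑ k ∈ Finset.Icc 2 j, ((bernoulli k : ℝ) / j) * (j.choose k) * (2 ^ k - 1) *
            ((-1 : ℝ) ^ (ℓ + 1 + (y₂ : ℤ)) * (y₂ : ℝ) ^ (j - k) -
              (-1 : ℝ) ^ (ℓ + 1 + (y₁ : ℤ)) * (y₁ : ℝ) ^ (j - k)) := by
  have hsucc : ∀ y : ℕ, (-1 : ℝ) ^ (ℓ + 1 + (y : ℤ)) = -(-1) ^ (ℓ + (y : ℤ)) := fun y => by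
    rw [add_right_comm, zpow_add_one₀ (by norm_num), mul_neg_one]
  have hsq : ∀ y : ℕ, ((-1 : ℝ) ^ (ℓ + (y : ℤ))) ^ 2 = 1 := fun y => by
    rw [sq, ← zpow_add₀ (by norm_num), ← two_mul, zpow_mul]
    norm_num
  have hinterior : ∀ x ∈ Ioo y₁ y₂, (-1 : ℝ) ^ (ℓ + (x : ℤ)) * (x : ℝ) ^ (j - 1) *
        (if x = y₂ then 1 / 2 + v * (-1 : ℝ) ^ (ℓ + 1 + (y₂ : ℤ))
         else if x = y₁ then 1 / 2 - v * (-1 : ℝ) ^ (ℓ + 1 + (y₁ : ℤ)) else 1) =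
      (-1 : ℝ) ^ (ℓ + (x : ℤ)) * (x : ℝ) ^ (j - 1) := fun x hx => by
    rw [mem_Ioo] at hx
    rw [if_neg hx.2.ne, if_neg hx.1.ne', mul_one]
  have htelescope := sum_Ioc_neg_one_zpow_mul_pow (K := ℝ) ℓ j h.le
  rw [Ioc_eq_cons_Ioo h, sum_cons] at htelescope
  rw [Icc_eq_cons_Ioc h.le, sum_cons, Ioc_eq_cons_Ioo h, sum_cons, if_pos rfl, if_neg h.ne,
    if_pos rfl, sum_congr rfl hinterior, hsucc, hsucc, sum_Icc_bernoulli_mul_sub]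
  linear_combination htelescope + v * (y₁ : ℝ) ^ (j - 1) * hsq y₁ - v * (y₂ : ℝ) ^ (j - 1) * hsq y₂

/-- Alternating weighted power sum for the two-periodic interlacing step:
`∑_{x=y₁}^{y₂} (-1)^{ℓ+x} x^{j-1} Ω(x) = -v(y₂^{j-1} - y₁^{j-1})
  - ∑_{k=2}^{j} (B_k/j) C(j,k) (2^k-1) ((-1)^{ℓ+1+y₂} y₂^{j-k} - (-1)^{ℓ+1+y₁} y₁^{j-k})`
with `Ω(y₂) = 1/2 + v(-1)^{ℓ+1+y₂}`, `Ω(y₁) = 1/2 - v(-1)^{ℓ+1+y₁}`, `Ω(x) = 1` otherwise. -/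
theorem alternating_weighted_power_sum (v : ℝ) (ℓ : ℤ) (j : ℕ) (hj : 1 ≤ j)
    (y₁ y₂ : ℕ) (h : y₁ < y₂) :
    ∑ x ∈ Finset.Icc y₁ y₂, (-1 : ℝ) ^ (ℓ + (x : ℤ)) * (x : ℝ) ^ (j - 1) *
        (if x = y₂ then 1 / 2 + v * (-1 : ℝ) ^ (ℓ + 1 + (y₂ : ℤ))
         else if x = y₁ then 1 / 2 - v * (-1 : ℝ) ^ (ℓ + 1 + (y₁ : ℤ)) else 1)
      = -v * ((y₂ : ℝ) ^ (j - 1) - (y₁ : ℝ) ^ (j - 1))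
        - ∑ k ∈ Finset.Icc 2 j, ((bernoulli k : ℝ) / j) * (j.choose k) * (2 ^ k - 1) *
            ((-1 : ℝ) ^ (ℓ + 1 + (y₂ : ℤ)) * (y₂ : ℝ) ^ (j - k) -
              (-1 : ℝ) ^ (ℓ + 1 + (y₁ : ℤ)) * (y₁ : ℝ) ^ (j - k)) :=
  alternating_weighted_power_sum_general v ℓ j y₁ y₂ h
end
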